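/- For all i, j ∈ I one has n_i^{−1} h_j n_i = h_j − (α_i, α_j^∨) h_i; and for all i ∈ I and α ∈ Φ one has n_i 𝔤_α n_i^{−1} = 𝔤_{s_i(α)}, where 𝔤_α := {x ∈ 𝔤 : [h_j, x] = (α, α_j^∨) x for all j ∈ I}. -/

import Mathlib

/-!
Every `μ ∈ Ψ` pairs with `αᵢ^∨` to `0` or `±1`, so `z_μ` spans either a trivial or, together
with `z_{μ ∓ αᵢ}`, a two-dimensional piece on which `eᵢ, fᵢ` act as on the standard
`𝔰𝔩₂`-module. Hence `nᵢ z_μ = ± z_{sᵢ μ}`, and since `hⱼ` is diagonal with eigenvalue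
`(μ, αⱼ^∨)`, conjugating `hⱼ` by `nᵢ` gives `hⱼ - (αᵢ, αⱼ^∨) hᵢ`. As `eᵢ² = fᵢ² = 0`,
`nᵢ = exp eᵢ · exp (-fᵢ) · exp eᵢ` and conjugation by `nᵢ` is a product of `exp (ad x)` with
`x ∈ 𝔤`, so it preserves `𝔤`; with the first identity it carries `𝔤_α` onto `𝔤_{sᵢ α}`.
-/

noncomputable section

open scoped BigOperators

attribute [local instance 100] LieRing.ofAssociativeRing

/-- `pr B x y` is the pairing `(x, y^∨) = 2(x,y)/(y,y)`. -/
def pr {E : Type} [AddCommGroup E] [Module ℚ E] (B : E →ₗ[ℚ] E →ₗ[ℚ] ℚ) (x y : E) : ℚ :=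
  2 * B x y / B y y

/-- A reduced irreducible crystallographic root system `Φ` in a finite-dimensional ℚ-vector
space `E` equipped with a positive definite symmetric bilinear form, together with a system of
simple roots `α i` (`i ∈ I`). -/
structure RootSystemCtx (E I : Type) [AddCommGroup E] [Module ℚ E] [Fintype I] : Type where
  B : E →ₗ[ℚ] E →ₗ[ℚ] ℚ
  Bsymm : ∀ x y, B x y = B y x
  Bpos : ∀ x, x ≠ 0 → 0 < B x x
  findim : FiniteDimensional ℚ E
  Φ : Set E
  Φfin : Φ.Finite
  zero_nmem : (0 : E) ∉ Φ
  reduced : ∀ a ∈ Φ, ∀ b ∈ Φ, b ≠ a → b ≠ -a → LinearIndependent ℚ ![a, b]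
  crystal : ∀ a ∈ Φ, ∀ b ∈ Φ, ∃ n : ℤ, pr B b a = (n : ℚ)
  reflect_mem : ∀ a ∈ Φ, ∀ b ∈ Φ, b - pr B b a • a ∈ Φ
  α : I → E
  α_mem : ∀ i, α i ∈ Φ
  α_indep : LinearIndependent ℚ α
  α_span : Submodule.span ℚ (Set.range α) = ⊤
  pos_neg : ∀ b ∈ Φ, (∃ cf : I → ℤ, (∀ i, 0 ≤ cf i) ∧ b = ∑ i, (cf i : ℚ) • α i) ∨
      (∃ cf : I → ℤ, (∀ i, cf i ≤ 0) ∧ b = ∑ i, (cf i : ℚ) • α i)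
  irred : ¬ ∃ Φ₁ Φ₂ : Set E, Φ₁.Nonempty ∧ Φ₂.Nonempty ∧ Φ₁ ∪ Φ₂ = Φ ∧
      ∀ a ∈ Φ₁, ∀ b ∈ Φ₂, B a b = 0

namespace RootSystemCtx

variable {E I : Type} [AddCommGroup E] [Module ℚ E] [Fintype I] (c : RootSystemCtx E I)

/-- The linear functional `(·, a^∨)`. -/
def coform (a : E) : Module.Dual ℚ E := (2 * (c.B a a)⁻¹) • (c.B.flip a)

lemma coform_apply (a x : E) : c.coform a x = pr c.B x a := by
  simp only [coform, LinearMap.smul_apply, LinearMap.flip_apply, smul_eq_mul, pr,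
    div_eq_mul_inv]
  ring

lemma coform_self {a : E} (ha : a ∈ c.Φ) : c.coform a a = 2 := by
  have h0 : a ≠ 0 := fun h => c.zero_nmem (h ▸ ha)
  have hB : c.B a a ≠ 0 := ne_of_gt (c.Bpos a h0)
  rw [coform_apply, pr]
  field_simp

/-- The simple reflection `s i : v ↦ v - (v, αᵢ^∨) αᵢ`. -/
def s (i : I) : E ≃ₗ[ℚ] E := Module.reflection (c.coform_self (c.α_mem i))

lemma s_apply (i : I) (v : E) : c.s i v = v - pr c.B v (c.α i) • c.α i := by
  rw [s, Module.reflection_apply, coform_apply]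

/-- The Weyl group, as a subgroup of the group of linear automorphisms of `E`. -/
def Weyl : Subgroup (E ≃ₗ[ℚ] E) := Subgroup.closure (Set.range c.s)

/-- `lam` is a minuscule (dominant) weight: a nonzero dominant weight (integral pairing
with every simple coroot) with `(lam, a^∨) ∈ {0, ±1}` for every root `a`. -/
def IsMinuscule (lam : E) : Prop :=
  lam ≠ 0 ∧ (∀ i, ∃ n : ℤ, pr c.B lam (c.α i) = (n : ℚ)) ∧ (∀ i, 0 ≤ pr c.B lam (c.α i)) ∧
    ∀ a ∈ c.Φ, pr c.B lam a = 0 ∨ pr c.B lam a = 1 ∨ pr c.B lam a = -1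

/-- `b` is a positive root. -/
def IsPos (b : E) : Prop :=
  b ∈ c.Φ ∧ ∃ cf : I → ℚ, (∀ i, 0 ≤ cf i) ∧ b = ∑ i, cf i • c.α i

end RootSystemCtx

/-- A nonempty union `Ψ` of Weyl group orbits of minuscule weights. -/
structure PsiData {E I : Type} [AddCommGroup E] [Module ℚ E] [Fintype I]
    (c : RootSystemCtx E I) : Type where
  Ψ : Set E
  nonempty : Ψ.Nonempty
  finite : Ψ.Finite
  orbit : ∀ μ ∈ Ψ, ∃ lam, c.IsMinuscule lam ∧ ∃ w ∈ c.Weyl, w lam = μ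
  stab : ∀ μ ∈ Ψ, ∀ w ∈ c.Weyl, w μ ∈ Ψ

/-- `nOp e f i t tinv` is the operator `(1 + t eᵢ)(1 - t⁻¹ fᵢ)(1 + t eᵢ)`, where `tinv`
is the inverse of `t`. -/
def nOp {I K M' : Type} [CommRing K] [AddCommGroup M'] [Module K M']
    (e f : I → Module.End K M') (i : I) (t tinv : K) : Module.End K M' :=
  (1 + t • e i) * (1 - tinv • f i) * (1 + t • e i)

/-- `hOp e f i t` is the operator `hᵢ(t) = nᵢ(t) nᵢ(-1)` for a unit `t`. -/
def hOp {I K M' : Type} [CommRing K] [AddCommGroup M'] [Module K M']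
    (e f : I → Module.End K M') (i : I) (t : Kˣ) : Module.End K M' :=
  nOp e f i (t : K) ((t⁻¹ : Kˣ) : K) * nOp e f i ((-1 : Kˣ) : K) (((-1 : Kˣ)⁻¹ : Kˣ) : K)

/-- Conjugation `n_{i₁} ⋯ n_{i_k} x n_{i_k}⁻¹ ⋯ n_{i₁}⁻¹` for a list `l = [i₁, …, i_k]`. -/
def conjOp {I M' : Type} [AddCommGroup M'] [Module ℂ M'] (nu : I → (Module.End ℂ M')ˣ)
    (x : Module.End ℂ M') (l : List I) : Module.End ℂ M' :=
  ↑((l.map nu).prod) * x * ↑(((l.map nu).prod)⁻¹)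

/-- The Lie subalgebra of `𝔤𝔩(M)` generated by the `eᵢ` and `fᵢ`. -/
def genLie {I M' : Type} [AddCommGroup M'] [Module ℂ M'] (e f : I → Module.End ℂ M') :
    LieSubalgebra ℂ (Module.End ℂ M') :=
  LieSubalgebra.lieSpan ℂ (Module.End ℂ M') (Set.range e ∪ Set.range f)

/-- The root space `𝔤_a = {x ∈ 𝔤 ∣ [hⱼ, x] = (a, αⱼ^∨) x for all j}`, as a set. -/
def rootSet {E I M' : Type} [AddCommGroup E] [Module ℚ E] [Fintype I]
    [AddCommGroup M'] [Module ℂ M'] (c : RootSystemCtx E I)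
    (e f h : I → Module.End ℂ M') (a : E) : Set (Module.End ℂ M') :=
  {x | x ∈ genLie e f ∧ ∀ j, ⁅h j, x⁆ = ((pr c.B a (c.α j) : ℚ) : ℂ) • x}

/-- The root space `𝔤_a`, as a submodule of `𝔤𝔩(M)`. -/
def rootSp {E I M' : Type} [AddCommGroup E] [Module ℚ E] [Fintype I]
    [AddCommGroup M'] [Module ℂ M'] (c : RootSystemCtx E I)
    (e f h : I → Module.End ℂ M') (a : E) : Submodule ℂ (Module.End ℂ M') :=
  (genLie e f).toSubmodule ⊓ ⨅ j : I,
    Module.End.eigenspace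
      (LinearMap.mulLeft ℂ (h j) - LinearMap.mulRight ℂ (h j) : Module.End ℂ (Module.End ℂ M'))
      ((pr c.B a (c.α j) : ℚ) : ℂ)

/-- The diagonal subgroup `H` generated by all `hᵢ(t)`, `t ∈ Kˣ`. -/
def Hgroup {I K M' : Type} [CommRing K] [AddCommGroup M'] [Module K M']
    (e f : I → Module.End K M') : Subgroup (Module.End K M')ˣ :=
  Subgroup.closure {g | ∃ (i : I) (t : Kˣ), (g : Module.End K M') = hOp e f i t}

/-- The monomial subgroup `N` generated by all `nᵢ(t)`, `t ∈ Kˣ`. -/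
def Ngroup {I K M' : Type} [CommRing K] [AddCommGroup M'] [Module K M']
    (e f : I → Module.End K M') : Subgroup (Module.End K M')ˣ :=
  Subgroup.closure {g | ∃ (i : I) (t : Kˣ),
    (g : Module.End K M') = nOp e f i (t : K) ((t⁻¹ : Kˣ) : K)}

/-- The subgroup `U⁺` generated by all `x_γ(t) = 1 + t ē_γ` with `γ ∈ Φ⁺`. -/
def Uplus {E I K M' : Type} [AddCommGroup E] [Module ℚ E] [Fintype I]
    [CommRing K] [AddCommGroup M'] [Module K M'] (c : RootSystemCtx E I)
    (eb : E → Module.End K M') : Subgroup (Module.End K M')ˣ :=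
  Subgroup.closure {g | ∃ γ, c.IsPos γ ∧ ∃ t : K, (g : Module.End K M') = 1 + t • eb γ}

/-- The subgroup `U⁻` generated by all `x_γ(t) = 1 + t ē_γ` with `γ ∈ Φ⁻`. -/
def Uminus {E I K M' : Type} [AddCommGroup E] [Module ℚ E] [Fintype I]
    [CommRing K] [AddCommGroup M'] [Module K M'] (c : RootSystemCtx E I)
    (eb : E → Module.End K M') : Subgroup (Module.End K M')ˣ :=
  Subgroup.closure {g | ∃ γ, c.IsPos (-γ) ∧ ∃ t : K, (g : Module.End K M') = 1 + t • eb γ}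

/-- The subgroup `Uᵢ⁺` generated by all `x_γ(t)` with `γ ∈ Φ⁺`, `γ ≠ αᵢ`. -/
def UplusI {E I K M' : Type} [AddCommGroup E] [Module ℚ E] [Fintype I]
    [CommRing K] [AddCommGroup M'] [Module K M'] (c : RootSystemCtx E I)
    (eb : E → Module.End K M') (i : I) : Subgroup (Module.End K M')ˣ :=
  Subgroup.closure {g | ∃ γ, c.IsPos γ ∧ γ ≠ c.α i ∧ ∃ t : K, (g : Module.End K M') = 1 + t • eb γ}

open scoped Pointwise

section Pairing

variable {E : Type} [AddCommGroup E] [Module ℚ E] (B : E →ₗ[ℚ] E →ₗ[ℚ] ℚ)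

lemma pr_add_left (x y w : E) : pr B (x + y) w = pr B x w + pr B y w := by
  simp only [pr, map_add, LinearMap.add_apply, mul_add, add_div]

lemma pr_sub_left (x y w : E) : pr B (x - y) w = pr B x w - pr B y w := by
  simp only [pr, map_sub, LinearMap.sub_apply, mul_sub, sub_div]

lemma pr_smul_left (t : ℚ) (x w : E) : pr B (t • x) w = t * pr B x w := by
  simp only [pr, map_smul, LinearMap.smul_apply, smul_eq_mul, mul_left_comm, mul_div_assoc]

end Pairing

namespace RootSystemCtx

variable {E I : Type} [AddCommGroup E] [Module ℚ E] [Fintype I] (c : RootSystemCtx E I)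

lemma pr_α_self (i : I) : pr c.B (c.α i) (c.α i) = 2 := by
  rw [← c.coform_apply, c.coform_self (c.α_mem i)]

lemma pr_s_apply (i j : I) (b : E) :
    pr c.B (c.s i b) (c.α j) = pr c.B b (c.α j) - pr c.B b (c.α i) * pr c.B (c.α i) (c.α j) := by
  rw [c.s_apply, pr_sub_left, pr_smul_left]

lemma s_s (i : I) (b : E) : c.s i (c.s i b) = b :=
  Module.involutive_reflection (c.coform_self (c.α_mem i)) b

lemma B_s_s (i : I) (x y : E) : c.B (c.s i x) (c.s i y) = c.B x y := by
  have hα : c.B (c.α i) (c.α i) ≠ 0 := (c.Bpos _ fun h => c.zero_nmem (h ▸ c.α_mem i)).ne'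
  simp only [c.s_apply, pr, map_sub, map_smul, LinearMap.sub_apply, LinearMap.smul_apply,
    smul_eq_mul, c.Bsymm (c.α i) y]
  field_simp
  ring

lemma s_mem_Weyl (i : I) : c.s i ∈ c.Weyl :=
  Subgroup.subset_closure ⟨i, rfl⟩

lemma B_apply_apply_of_mem_Weyl {w : E ≃ₗ[ℚ] E} (hw : w ∈ c.Weyl) (x y : E) :
    c.B (w x) (w y) = c.B x y := by
  induction hw using Subgroup.closure_induction generalizing x y with
  | mem w hw => obtain ⟨i, rfl⟩ := hw; exact c.B_s_s i x y
  | one => rfl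
  | mul u v _ _ hu hv => exact (hu _ _).trans (hv x y)
  | inv u _ hu => rw [← hu, LinearEquiv.coe_inv, u.apply_symm_apply, u.apply_symm_apply]

lemma s_smul_Φ (i : I) : c.s i • c.Φ = c.Φ := by
  have hsub : c.s i • c.Φ ⊆ c.Φ := by
    rintro _ ⟨b, hb, rfl⟩
    show c.s i b ∈ c.Φ
    rw [c.s_apply]
    exact c.reflect_mem _ (c.α_mem i) b hb
  refine hsub.antisymm fun b hb => ⟨c.s i b, hsub ⟨b, hb, rfl⟩, c.s_s i b⟩

lemma Weyl_le_stabilizer_Φ : c.Weyl ≤ MulAction.stabilizer (E ≃ₗ[ℚ] E) c.Φ :=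
  Subgroup.closure_le _ |>.mpr fun _ ⟨i, hi⟩ => hi ▸ c.s_smul_Φ i

end RootSystemCtx

namespace PsiData

variable {E I : Type} [AddCommGroup E] [Module ℚ E] [Fintype I] {c : RootSystemCtx E I}
  (P : PsiData c)

lemma pr_mem {μ : E} (hμ : μ ∈ P.Ψ) {a : E} (ha : a ∈ c.Φ) :
    pr c.B μ a = 0 ∨ pr c.B μ a = 1 ∨ pr c.B μ a = -1 := by
  obtain ⟨lam, hlam, w, hw, rfl⟩ := P.orbit μ hμ
  have hwa : w⁻¹ a ∈ c.Φ := by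
    rw [← c.Weyl_le_stabilizer_Φ (inv_mem hw)]
    exact Set.smul_mem_smul_set ha
  have hpr : pr c.B (w lam) a = pr c.B lam (w⁻¹ a) := by
    conv_lhs => rw [← w.apply_symm_apply a]
    simp only [pr, c.B_apply_apply_of_mem_Weyl hw, LinearEquiv.coe_inv]
  exact hpr ▸ hlam.2.2.2 _ hwa

lemma s_mem (i : I) {μ : E} (hμ : μ ∈ P.Ψ) : c.s i μ ∈ P.Ψ :=
  P.stab μ hμ _ (c.s_mem_Weyl i)

lemma sub_α_mem {i : I} {μ : E} (hμ : μ ∈ P.Ψ) (h1 : pr c.B μ (c.α i) = 1) :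
    μ - c.α i ∈ P.Ψ := by
  simpa [c.s_apply, h1] using P.s_mem i hμ

lemma add_α_mem {i : I} {μ : E} (hμ : μ ∈ P.Ψ) (h1 : pr c.B μ (c.α i) = -1) :
    μ + c.α i ∈ P.Ψ := by
  simpa [c.s_apply, h1] using P.s_mem i hμ

def reflect (i : I) (μ : P.Ψ) : P.Ψ := ⟨c.s i μ, P.s_mem i μ.2⟩

end PsiData

section Ring

variable {R : Type} [Ring R]

lemma one_add_mul_one_sub_of_mul_self_eq_zero {a : R} (ha : a * a = 0) :
    (1 + a) * (1 - a) = 1 := by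
  rw [show (1 + a) * (1 - a) = 1 - a * a by noncomm_ring, ha, sub_zero]

lemma one_sub_mul_one_add_of_mul_self_eq_zero {a : R} (ha : a * a = 0) :
    (1 - a) * (1 + a) = 1 := by
  simpa [sub_eq_add_neg] using one_add_mul_one_sub_of_mul_self_eq_zero (a := -a) (by simpa)

lemma mul_inv_triple_of_mul_self_eq_zero {a b : R} (ha : a * a = 0) (hb : b * b = 0) :
    (1 + a) * (1 - b) * (1 + a) * ((1 - a) * (1 + b) * (1 - a)) = 1 := by
  rw [show (1 + a) * (1 - b) * (1 + a) * ((1 - a) * (1 + b) * (1 - a))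
      = (1 + a) * ((1 - b) * ((1 + a) * (1 - a) * (1 + b)) * (1 - a)) by noncomm_ring,
    one_add_mul_one_sub_of_mul_self_eq_zero ha, one_mul,
    one_sub_mul_one_add_of_mul_self_eq_zero hb, one_mul,
    one_add_mul_one_sub_of_mul_self_eq_zero ha]

lemma mul_eq_mul_of_mul_eq_mul_of_inverse {A B X Y : R} (hAB : A * B = 1) (hBA : B * A = 1)
    (h : X * A = A * Y) : B * X = Y * B :=
  calc B * X = B * (X * A) * B := by rw [mul_assoc, mul_assoc, hAB, mul_one]
    _ = Y * B := by rw [h, ← mul_assoc, hBA, one_mul]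

lemma lie_mul_mul_of_mul_eq_mul {A B X Y : R} (hAB : A * B = 1) (hBA : B * A = 1)
    (h : X * A = A * Y) (x : R) : ⁅X, A * x * B⁆ = A * ⁅Y, x⁆ * B := by
  have h' := mul_eq_mul_of_mul_eq_mul_of_inverse hAB hBA h
  rw [Ring.lie_def, Ring.lie_def,
    show X * (A * x * B) - A * x * B * X = X * A * x * B - A * x * (B * X) by noncomm_ring,
    h, h']
  noncomm_ring

end Ring

namespace LieSubalgebra

variable {K A : Type} [Field K] [NeZero (2 : K)] [Ring A] [Algebra K A]
  (L : LieSubalgebra K A)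

/-- Conjugation by `1 + a = exp a` is `exp (ad a) = 1 + ad a + (ad a)² / 2` when `a² = 0`. -/
lemma one_add_mul_mul_one_sub_mem {a x : A} (ha : a ∈ L) (ha2 : a * a = 0) (hx : x ∈ L) :
    (1 + a) * x * (1 - a) ∈ L := by
  have hadad : ⁅a, ⁅a, x⁆⁆ = (-2 : K) • (a * x * a) := by
    rw [Ring.lie_def, Ring.lie_def, neg_smul, two_smul,
      show a * (a * x - x * a) - (a * x - x * a) * a = a * a * x - (a * x * a + a * x * a)
        + x * (a * a) by noncomm_ring, ha2]
    noncomm_ring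
  have hexp : (1 + a) * x * (1 - a) = x + ⁅a, x⁆ + (2 : K)⁻¹ • ⁅a, ⁅a, x⁆⁆ := by
    rw [hadad, smul_smul, inv_mul_eq_div, neg_div, div_self two_ne_zero, neg_one_smul,
      Ring.lie_def]
    noncomm_ring
  rw [hexp]
  exact L.add_mem (L.add_mem hx (L.lie_mem ha hx)) (L.smul_mem _ (L.lie_mem ha (L.lie_mem ha hx)))

lemma triple_conj_mem {a b x : A} (ha : a ∈ L) (hb : b ∈ L) (ha2 : a * a = 0)
    (hb2 : b * b = 0) (hx : x ∈ L) :
    (1 + a) * (1 - b) * (1 + a) * x * ((1 - a) * (1 + b) * (1 - a)) ∈ L := by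
  have hb' : -b ∈ L := L.neg_mem hb
  have hb2' : -b * -b = 0 := by rw [neg_mul_neg, hb2]
  have := L.one_add_mul_mul_one_sub_mem ha ha2 <|
    L.one_add_mul_mul_one_sub_mem hb' hb2' <| L.one_add_mul_mul_one_sub_mem ha ha2 hx
  convert this using 1
  noncomm_ring

end LieSubalgebra

section Monomial

variable {K M : Type} [CommRing K] [AddCommGroup M] [Module K M]

lemma nOp_one_one {I : Type} (e f : I → Module.End K M) (i : I) :
    nOp e f i 1 1 = (1 + e i) * (1 - f i) * (1 + e i) := by
  simp only [nOp, one_smul]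

lemma nOp_one_one_apply_of_eq_zero {I : Type} {e f : I → Module.End K M} {i : I} {x : M}
    (he : e i x = 0) (hf : f i x = 0) : nOp e f i 1 1 x = x := by
  simp [nOp_one_one, he, hf]

lemma nOp_one_one_apply_of_pair {I : Type} {e f : I → Module.End K M} {i : I} {u v : M}
    (heu : e i u = 0) (hfu : f i u = v) (hev : e i v = u) (hfv : f i v = 0) :
    nOp e f i 1 1 u = -v ∧ nOp e f i 1 1 v = u := by
  constructor
  · simp only [nOp_one_one, Module.End.mul_apply, LinearMap.add_apply, LinearMap.sub_apply,
      Module.End.one_apply, map_sub, heu, hfu, hev, add_zero]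
    abel
  · simp [nOp_one_one, heu, hfu, hev, hfv]

lemma Module.Basis.mul_eq_mul_of_monomial {ι : Type} (b : Module.Basis ι K M)
    {A D D' : Module.End K M} (σ : ι → ι) (d d' : ι → K)
    (hA : ∀ μ, ∃ ε : K, A (b μ) = ε • b (σ μ)) (hD : ∀ μ, D (b μ) = d μ • b μ)
    (hD' : ∀ μ, D' (b μ) = d' μ • b μ) (hd : ∀ μ, d (σ μ) = d' μ) :
    D * A = A * D' :=
  b.ext fun μ => by
    obtain ⟨ε, hε⟩ := hA μ
    simp only [Module.End.mul_apply, hε, hD', map_smul, hD, hd, smul_smul, mul_comm]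

end Monomial


structure MinusculeAction {E I : Type} [AddCommGroup E] [Module ℚ E] [Fintype I]
    {c : RootSystemCtx E I} (P : PsiData c) {M : Type} [AddCommGroup M] [Module ℂ M]
    (z : Module.Basis P.Ψ ℂ M) (e f h : I → Module.End ℂ M) : Prop where
  e_apply_of_pr_eq_neg_one : ∀ (i : I) (μ : P.Ψ) (hm : (μ : E) + c.α i ∈ P.Ψ),
    pr c.B (μ : E) (c.α i) = -1 → e i (z μ) = z ⟨(μ : E) + c.α i, hm⟩
  e_apply_of_pr_ne_neg_one : ∀ (i : I) (μ : P.Ψ), pr c.B (μ : E) (c.α i) ≠ -1 → e i (z μ) = 0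
  f_apply_of_pr_eq_one : ∀ (i : I) (μ : P.Ψ) (hm : (μ : E) - c.α i ∈ P.Ψ),
    pr c.B (μ : E) (c.α i) = 1 → f i (z μ) = z ⟨(μ : E) - c.α i, hm⟩
  f_apply_of_pr_ne_one : ∀ (i : I) (μ : P.Ψ), pr c.B (μ : E) (c.α i) ≠ 1 → f i (z μ) = 0
  h_apply : ∀ (i : I) (μ : P.Ψ), h i (z μ) = ((pr c.B (μ : E) (c.α i) : ℚ) : ℂ) • z μ

namespace MinusculeAction

variable {E I : Type} [AddCommGroup E] [Module ℚ E] [Fintype I] {c : RootSystemCtx E I}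
  {P : PsiData c} {M : Type} [AddCommGroup M] [Module ℂ M] {z : Module.Basis P.Ψ ℂ M}
  {e f h : I → Module.End ℂ M} (hM : MinusculeAction P z e f h) (i : I)
include hM

lemma e_mul_self : e i * e i = 0 := z.ext fun μ => by
  rw [Module.End.mul_apply, LinearMap.zero_apply]
  by_cases hμ : pr c.B μ (c.α i) = -1
  · rw [hM.e_apply_of_pr_eq_neg_one i μ (P.add_α_mem μ.2 hμ) hμ]
    refine hM.e_apply_of_pr_ne_neg_one i _ ?_
    show pr c.B ((μ : E) + c.α i) (c.α i) ≠ -1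
    rw [pr_add_left, hμ, c.pr_α_self]
    norm_num
  · rw [hM.e_apply_of_pr_ne_neg_one i μ hμ, map_zero]

lemma f_mul_self : f i * f i = 0 := z.ext fun μ => by
  rw [Module.End.mul_apply, LinearMap.zero_apply]
  by_cases hμ : pr c.B μ (c.α i) = 1
  · rw [hM.f_apply_of_pr_eq_one i μ (P.sub_α_mem μ.2 hμ) hμ]
    refine hM.f_apply_of_pr_ne_one i _ ?_
    show pr c.B ((μ : E) - c.α i) (c.α i) ≠ 1
    rw [pr_sub_left, hμ, c.pr_α_self]
    norm_num
  · rw [hM.f_apply_of_pr_ne_one i μ hμ, map_zero]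

lemma nOp_apply_of_sub {μ ν : P.Ψ} (hν : (ν : E) = μ - c.α i) (h1 : pr c.B μ (c.α i) = 1) :
    nOp e f i 1 1 (z μ) = -z ν ∧ nOp e f i 1 1 (z ν) = z μ := by
  have hν1 : pr c.B ν (c.α i) = -1 := by
    rw [hν, pr_sub_left, h1, c.pr_α_self]
    norm_num
  refine nOp_one_one_apply_of_pair (hM.e_apply_of_pr_ne_neg_one i μ (by rw [h1]; norm_num))
    ?_ ?_ (hM.f_apply_of_pr_ne_one i ν (by rw [hν1]; norm_num))
  · rw [hM.f_apply_of_pr_eq_one i μ (hν ▸ ν.2) h1]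
    exact congrArg z (Subtype.ext hν.symm)
  · rw [hM.e_apply_of_pr_eq_neg_one i ν (by rw [hν, sub_add_cancel]; exact μ.2) hν1]
    exact congrArg z (Subtype.ext (show (ν : E) + c.α i = μ by rw [hν, sub_add_cancel]))

lemma nOp_apply_basis (μ : P.Ψ) : ∃ ε : ℂ, nOp e f i 1 1 (z μ) = ε • z (P.reflect i μ) := by
  have hs : ((P.reflect i μ : P.Ψ) : E) = μ - pr c.B μ (c.α i) • c.α i := c.s_apply i μ
  rcases P.pr_mem μ.2 (c.α_mem i) with h0 | h1 | hm1
  · refine ⟨1, ?_⟩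
    rw [show P.reflect i μ = μ from Subtype.ext (by simp [hs, h0]), one_smul]
    exact nOp_one_one_apply_of_eq_zero (hM.e_apply_of_pr_ne_neg_one i μ (by rw [h0]; norm_num))
      (hM.f_apply_of_pr_ne_one i μ (by rw [h0]; norm_num))
  · rw [h1, one_smul] at hs
    exact ⟨-1, by rw [(hM.nOp_apply_of_sub i hs h1).1, neg_one_smul]⟩
  · rw [hm1, neg_one_smul, sub_neg_eq_add] at hs
    have h1 : pr c.B (P.reflect i μ) (c.α i) = 1 := by
      rw [hs, pr_add_left, hm1, c.pr_α_self]
      norm_num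
    exact ⟨1, by rw [(hM.nOp_apply_of_sub i (by rw [hs, add_sub_cancel_right]) h1).2, one_smul]⟩

lemma h_mul_nOp (j : I) :
    h j * nOp e f i 1 1 = nOp e f i 1 1 * (h j - ((pr c.B (c.α i) (c.α j) : ℚ) : ℂ) • h i) :=
  z.mul_eq_mul_of_monomial (P.reflect i) (fun μ => ((pr c.B μ (c.α j) : ℚ) : ℂ))
    (fun μ => ((pr c.B μ (c.α j) - pr c.B (c.α i) (c.α j) * pr c.B μ (c.α i) : ℚ) : ℂ))
    (hM.nOp_apply_basis i) (hM.h_apply j)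
    (fun μ => by
      simp only [LinearMap.sub_apply, LinearMap.smul_apply, hM.h_apply, smul_smul, ← sub_smul]
      push_cast
      rfl)
    (fun μ => by
      simp only [PsiData.reflect, c.pr_s_apply]
      push_cast
      ring)

lemma sub_smul_mul_nOp (j : I) :
    (h j - ((pr c.B (c.α i) (c.α j) : ℚ) : ℂ) • h i) * nOp e f i 1 1 = nOp e f i 1 1 * h j := by
  rw [sub_mul, smul_mul_assoc, hM.h_mul_nOp i j, hM.h_mul_nOp i i, c.pr_α_self]
  simp only [mul_sub, mul_smul_comm]
  push_cast
  module

end MinusculeAction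

lemma genLie_conj_nOp_mem {I M : Type} [AddCommGroup M] [Module ℂ M]
    {e f : I → Module.End ℂ M} {i : I} (he : e i * e i = 0) (hf : f i * f i = 0)
    {x : Module.End ℂ M} (hx : x ∈ genLie e f) :
    nOp e f i 1 1 * x * ((1 - e i) * (1 + f i) * (1 - e i)) ∈ genLie e f ∧
      (1 - e i) * (1 + f i) * (1 - e i) * x * nOp e f i 1 1 ∈ genLie e f := by
  have heL : e i ∈ genLie e f := LieSubalgebra.subset_lieSpan (Or.inl ⟨i, rfl⟩)
  have hfL : f i ∈ genLie e f := LieSubalgebra.subset_lieSpan (Or.inr ⟨i, rfl⟩)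
  constructor
  · rw [nOp_one_one]
    exact (genLie e f).triple_conj_mem heL hfL he hf hx
  · have := (genLie e f).triple_conj_mem (neg_mem heL) (neg_mem hfL)
      (by rwa [neg_mul_neg]) (by rwa [neg_mul_neg]) hx
    simpa only [nOp_one_one, ← sub_eq_add_neg, sub_neg_eq_add] using this

lemma conj_mem_rootSet {E I M : Type} [AddCommGroup E] [Module ℚ E] [Fintype I]
    [AddCommGroup M] [Module ℂ M] (c : RootSystemCtx E I) (e f h : I → Module.End ℂ M) (i : I)
    {A B : Module.End ℂ M} (hAB : A * B = 1) (hBA : B * A = 1)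
    (hA : ∀ j, h j * A = A * (h j - ((pr c.B (c.α i) (c.α j) : ℚ) : ℂ) • h i))
    (hL : ∀ x ∈ genLie e f, A * x * B ∈ genLie e f) {a : E} {x : Module.End ℂ M}
    (hx : x ∈ rootSet c e f h a) : A * x * B ∈ rootSet c e f h (c.s i a) := by
  refine ⟨hL x hx.1, fun j => ?_⟩
  rw [lie_mul_mul_of_mul_eq_mul hAB hBA (hA j), sub_lie, smul_lie, hx.2 j, hx.2 i, smul_smul,
    ← sub_smul, mul_smul_comm, smul_mul_assoc, c.pr_s_apply]
  push_cast
  ring_nf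

/-- Lemma 3.3: nᵢ⁻¹ hⱼ nᵢ = hⱼ - (αᵢ, αⱼ^∨) hᵢ and nᵢ 𝔤_a nᵢ⁻¹ = 𝔤_{sᵢ(a)}. -/
theorem stmt_9 {E I : Type} [AddCommGroup E] [Module ℚ E] [Fintype I]
    (c : RootSystemCtx E I) (P : PsiData c)
    (M : Type) [AddCommGroup M] [Module ℂ M] (z : Module.Basis P.Ψ ℂ M)
    (e f : I → Module.End ℂ M)
    (he1 : ∀ (i : I) (μ : P.Ψ) (hm : (μ : E) + c.α i ∈ P.Ψ),
      pr c.B (μ : E) (c.α i) = -1 → e i (z μ) = z ⟨(μ : E) + c.α i, hm⟩)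
    (he0 : ∀ (i : I) (μ : P.Ψ), pr c.B (μ : E) (c.α i) ≠ -1 → e i (z μ) = 0)
    (hf1 : ∀ (i : I) (μ : P.Ψ) (hm : (μ : E) - c.α i ∈ P.Ψ),
      pr c.B (μ : E) (c.α i) = 1 → f i (z μ) = z ⟨(μ : E) - c.α i, hm⟩)
    (hf0 : ∀ (i : I) (μ : P.Ψ), pr c.B (μ : E) (c.α i) ≠ 1 → f i (z μ) = 0)
    (h : I → Module.End ℂ M)
    (hh : ∀ (i : I) (μ : P.Ψ), h i (z μ) = ((pr c.B (μ : E) (c.α i) : ℚ) : ℂ) • z μ)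
    (i : I) (ninv : Module.End ℂ M)
    (hn1 : ninv * nOp e f i 1 1 = 1) (hn2 : nOp e f i 1 1 * ninv = 1) :
    (∀ j : I, ninv * h j * nOp e f i 1 1
      = h j - ((pr c.B (c.α i) (c.α j) : ℚ) : ℂ) • h i) ∧
    (∀ a ∈ c.Φ,
      (fun x => nOp e f i 1 1 * x * ninv) '' rootSet c e f h a
        = rootSet c e f h (c.s i a)) := by
  have hM : MinusculeAction P z e f h := ⟨he1, he0, hf1, hf0, hh⟩
  have hninv : ninv = (1 - e i) * (1 + f i) * (1 - e i) := left_inv_eq_right_inv hn1 <| by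
    rw [nOp_one_one]
    exact mul_inv_triple_of_mul_self_eq_zero (hM.e_mul_self i) (hM.f_mul_self i)
  have hL : ∀ x ∈ genLie e f, nOp e f i 1 1 * x * ninv ∈ genLie e f ∧
      ninv * x * nOp e f i 1 1 ∈ genLie e f := fun x hx =>
    hninv ▸ genLie_conj_nOp_mem (hM.e_mul_self i) (hM.f_mul_self i) hx
  refine ⟨fun j => by rw [mul_assoc, hM.h_mul_nOp i j, ← mul_assoc, hn1, one_mul], fun a _ => ?_⟩
  refine Set.Subset.antisymm ?_ fun y hy => ⟨ninv * y * nOp e f i 1 1, ?_, ?_⟩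
  · rintro _ ⟨x, hx, rfl⟩
    exact conj_mem_rootSet c e f h i hn2 hn1 (hM.h_mul_nOp i) (fun x hx => (hL x hx).1) hx
  · simpa only [c.s_s] using conj_mem_rootSet c e f h i hn1 hn2
      (fun j => (mul_eq_mul_of_mul_eq_mul_of_inverse hn2 hn1 (hM.sub_smul_mul_nOp i j)).symm)
      (fun x hx => (hL x hx).2) hy
  · show nOp e f i 1 1 * (ninv * y * nOp e f i 1 1) * ninv = y
    rw [show nOp e f i 1 1 * (ninv * y * nOp e f i 1 1) * ninv
      = nOp e f i 1 1 * ninv * y * (nOp e f i 1 1 * ninv) by noncomm_ring, hn2, one_mul, mul_one]
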